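/- arXiv:1803.03237 — 2 statements merged into one kernel-verified Lean document; each statement's English description precedes it below -/
import Mathlib

section
/- For continuous ξ : [t,0] → ℝ^n, continuous l, g, and t ≤ t' ≤ 0, the cost 𝒱 over horizon [t,0] satisfies 𝒱_{[t,0]}(ξ) = min{ min_{τ ∈ [t,t']} max( l(ξ(τ),τ), max_{q∈[t,τ]} g(ξ(q),q) ), max( max_{q∈[t,t']} g(ξ(q),q), 𝒱_{[t',0]}(ξ) ) }. -/
/-- Dynamic-programming decomposition of the reach-avoid cost functional over a
split time horizon [t, t'] ∪ [t', 0]. -/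
theorem reach_avoid_cost_time_split
    (n : ℕ) (t t' : ℝ) (htt' : t ≤ t') (ht' : t' ≤ 0)
    (l g : (Fin n → ℝ) → ℝ → ℝ) (ξ : ℝ → (Fin n → ℝ))
    (hl : Continuous fun p : (Fin n → ℝ) × ℝ => l p.1 p.2)
    (hg : Continuous fun p : (Fin n → ℝ) × ℝ => g p.1 p.2)
    (hξ : ContinuousOn ξ (Set.Icc t 0)) :
    sInf ((fun τ => max (l (ξ τ) τ)
        (sSup ((fun q => g (ξ q) q) '' Set.Icc t τ))) '' Set.Icc t 0) =
    min
      (sInf ((fun τ => max (l (ξ τ) τ)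
          (sSup ((fun q => g (ξ q) q) '' Set.Icc t τ))) '' Set.Icc t t'))
      (max (sSup ((fun q => g (ξ q) q) '' Set.Icc t t'))
        (sInf ((fun τ => max (l (ξ τ) τ)
            (sSup ((fun q => g (ξ q) q) '' Set.Icc t' τ))) '' Set.Icc t' 0))) := by
  have ht0 : t ≤ 0 := htt'.trans ht'
  set G : ℝ → ℝ := fun q => g (ξ q) q with hGdef
  set L : ℝ → ℝ := fun q => l (ξ q) q with hLdef
  have hG : ContinuousOn G (Set.Icc t 0) :=
    by have h := hg.comp_continuousOn (hξ.prodMk continuousOn_id); exact h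
  have hL : ContinuousOn L (Set.Icc t 0) :=
    by have h := hl.comp_continuousOn (hξ.prodMk continuousOn_id); exact h
  have hGbdd : BddAbove (G '' Set.Icc t 0) :=
    (isCompact_Icc.image_of_continuousOn hG).bddAbove
  obtain ⟨c, hc⟩ : BddBelow (L '' Set.Icc t 0) :=
    (isCompact_Icc.image_of_continuousOn hL).bddBelow
  set F : ℝ → ℝ := fun τ => max (L τ) (sSup (G '' Set.Icc t τ)) with hFdef
  set F' : ℝ → ℝ := fun τ => max (L τ) (sSup (G '' Set.Icc t' τ)) with hF'def
  set A : ℝ := sSup (G '' Set.Icc t t') with hAdef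
  -- lower bound c works for F and F' images over subsets of [t,0]
  have hFlb : ∀ S : Set ℝ, S ⊆ Set.Icc t 0 → BddBelow (F '' S) := by
    intro S hS
    refine ⟨c, ?_⟩
    rintro y ⟨τ, hτ, rfl⟩
    exact le_trans (hc ⟨τ, hS hτ, rfl⟩) (le_max_left _ _)
  have hF'lb : ∀ S : Set ℝ, S ⊆ Set.Icc t 0 → BddBelow (F' '' S) := by
    intro S hS
    refine ⟨c, ?_⟩
    rintro y ⟨τ, hτ, rfl⟩
    exact le_trans (hc ⟨τ, hS hτ, rfl⟩) (le_max_left _ _)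
  -- pointwise identity on [t', 0]
  have key : ∀ τ ∈ Set.Icc t' 0, F τ = max A (F' τ) := by
    intro τ hτ
    have hsplit : Set.Icc t t' ∪ Set.Icc t' τ = Set.Icc t τ :=
      Set.Icc_union_Icc_eq_Icc htt' hτ.1
    have h1 : BddAbove (G '' Set.Icc t t') :=
      hGbdd.mono (Set.image_mono (Set.Icc_subset_Icc le_rfl ht'))
    have h2 : BddAbove (G '' Set.Icc t' τ) :=
      hGbdd.mono (Set.image_mono (Set.Icc_subset_Icc htt' hτ.2))
    have hsup : sSup (G '' Set.Icc t τ) = max A (sSup (G '' Set.Icc t' τ)) := by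
      rw [← hsplit, Set.image_union,
        csSup_union h1 (by simp [Set.Nonempty.image, Set.nonempty_Icc.2 htt'])
          h2 (by simp [Set.Nonempty.image, Set.nonempty_Icc.2 hτ.1]),
        hAdef]
    simp only [hFdef, hF'def, hsup]
    exact max_left_comm _ _ _
  -- rewrite the inf over [t',0]
  have himg : F '' Set.Icc t' 0 = (fun x => max A x) '' (F' '' Set.Icc t' 0) := by
    rw [← Set.image_comp]
    exact Set.image_congr key
  have hmono : Monotone (fun x : ℝ => max A x) := fun _ _ h => max_le_max le_rfl h
  have hne : (F' '' Set.Icc t' 0).Nonempty :=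
    (Set.nonempty_Icc.2 ht').image _
  have hstep : sInf (F '' Set.Icc t' 0) = max A (sInf (F' '' Set.Icc t' 0)) := by
    rw [himg]
    exact (hmono.map_csInf_of_continuousAt
      ((continuous_const.max continuous_id).continuousAt) hne
      (hF'lb _ (Set.Icc_subset_Icc htt' le_rfl))).symm
  -- split the main inf
  have hmain : Set.Icc t t' ∪ Set.Icc t' 0 = Set.Icc t 0 :=
    Set.Icc_union_Icc_eq_Icc htt' ht'
  calc sInf (F '' Set.Icc t 0)
      = sInf (F '' Set.Icc t t' ∪ F '' Set.Icc t' 0) := by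
        rw [← Set.image_union, hmain]
    _ = min (sInf (F '' Set.Icc t t')) (sInf (F '' Set.Icc t' 0)) := by
        rw [csInf_union (hFlb _ (Set.Icc_subset_Icc le_rfl ht'))
          ((Set.nonempty_Icc.2 htt').image _)
          (hFlb _ (Set.Icc_subset_Icc htt' le_rfl))
          ((Set.nonempty_Icc.2 ht').image _)]
    _ = min (sInf (F '' Set.Icc t t')) (max A (sInf (F' '' Set.Icc t' 0))) := by
        rw [hstep]
end

section
/- In the setting of the previous discrete-time dynamic program with both control and disturbance, define V_0 = ℓ and V_{k+1}(s) = min{ ℓ(s), max_{d ∈ D} min_{u ∈ U} V_k(F(s,u,d)) }, and let σ*_k : S → D be policies achieving the outer maximum (for the optimal value) at every step and state. Then for any control policies π_k : S → U, the rollout value Ṽ_K defined by Ṽ_0 = ℓ and Ṽ_{k+1}(s) = min{ ℓ(s), max_{d ∈ D} Ṽ_k(F(s, π_{k+1}(s), d)) } satisfies Ṽ_K(s) ≥ V_K(s) for all s. -/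
/-- Discrete-time DP with control and disturbance: when the rollout takes the true
worst case over disturbances at each step (the standard assumption that σ* is
worst-case for the optimal value), any control policies yield a rollout value
dominating the optimal game value. -/
theorem discrete_dp_worstcase_disturbance_rollout_dominates
    (S U D : Type*) [Fintype U] [Nonempty U] [Fintype D] [Nonempty D]
    (F : S → U → D → S) (ℓ : S → ℝ)
    (V : ℕ → S → ℝ)
    (hV0 : ∀ s, V 0 s = ℓ s)
    (hVk : ∀ k s, V (k + 1) s = min (ℓ s) (⨆ d : D, ⨅ u : U, V k (F s u d)))
    (σstar : ℕ → S → D)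
    (hσ : ∀ k s, (⨅ u : U, V k (F s u (σstar (k + 1) s))) =
        ⨆ d : D, ⨅ u : U, V k (F s u d))
    (π : ℕ → S → U)
    (Vt : ℕ → S → ℝ)
    (hVt0 : ∀ s, Vt 0 s = ℓ s)
    (hVtk : ∀ k s, Vt (k + 1) s = min (ℓ s) (⨆ d : D, Vt k (F s (π (k + 1) s) d))) :
    ∀ K s, V K s ≤ Vt K s := by
  intro K
  induction K with
  | zero => intro s; rw [hV0, hVt0]
  | succ k ih =>
    intro s
    rw [hVk, hVtk]
    refine min_le_min le_rfl ?_
    refine ciSup_le fun d => ?_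
    calc (⨅ u : U, V k (F s u d)) ≤ V k (F s (π (k + 1) s) d) :=
          ciInf_le (Set.Finite.bddBelow (Set.finite_range _)) _
      _ ≤ Vt k (F s (π (k + 1) s) d) := ih _
      _ ≤ ⨆ d : D, Vt k (F s (π (k + 1) s) d) :=
          le_ciSup (f := fun d => Vt k (F s (π (k + 1) s) d)) (Set.Finite.bddAbove (Set.finite_range _)) d
end
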